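/- For every canonically integrable function α ∈ I₁ over a pre-integration space, the partial sums of its representation converge to it in 1-norm: lim_{N→∞} ∫|α − ∑_{n=1}^N α(n)| = 0. Consequently, the image of I under the embedding i ↦ (i, 0·i, 0·i, …) is dense in (I₁, ‖·‖₁), and the embedding is norm-preserving. -/

import Mathlib

open Filter Topology

/-- A pre-integration space `(X, I, Λ, ∫)`: an inhabited set `X` with an
apartness relation, an `I`-set `Λ` of real-valued partial functions on `X`
(each index `i` has a domain `dom i` and a function `f i`, and equal partial
functions have equal indices), operations on `I` realizing scalar
multiplication, addition, absolute value and min-with-1 of the partial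
functions, and a functional `∫ = integ : I → ℝ` satisfying (PIS1)–(PIS4). -/
structure PreIntegrationSpace (X I : Type*) where
  inhab : Nonempty X
  apart : X → X → Prop
  apart_irrefl : ∀ x y : X, x = y → apart x y → False
  apart_symm : ∀ x y : X, apart x y → apart y x
  apart_cotrans : ∀ x y : X, apart x y → ∀ z : X, apart x z ∨ apart y z
  dom : I → Set X
  f : I → X → ℝ
  lam_set : ∀ i j : I, dom i = dom j → (∀ x ∈ dom i, f i x = f j x) → i = j
  smul : ℝ → I → I
  add : I → I → I
  abs : I → I
  min1 : I → I
  integ : I → ℝ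
  dom_smul : ∀ a i, dom (smul a i) = dom i
  f_smul : ∀ a i, ∀ x ∈ dom i, f (smul a i) x = a * f i x
  dom_add : ∀ i j, dom (add i j) = dom i ∩ dom j
  f_add : ∀ i j, ∀ x ∈ dom i ∩ dom j, f (add i j) x = f i x + f j x
  dom_abs : ∀ i, dom (abs i) = dom i
  f_abs : ∀ i, ∀ x ∈ dom i, f (abs i) x = |f i x|
  dom_min1 : ∀ i, dom (min1 i) = dom i
  f_min1 : ∀ i, ∀ x ∈ dom i, f (min1 i) x = min (f i x) 1
  pis1 : ∀ (a b : ℝ) (i j : I),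
    integ (add (smul a i) (smul b j)) = a * integ i + b * integ j
  pis2 : ∀ (i : I) (α : ℕ → I) (ℓ : ℝ),
    (∀ m, ∀ x ∈ dom (α m), 0 ≤ f (α m) x) →
    Tendsto (fun n => ∑ k ∈ Finset.range n, integ (α k)) atTop (𝓝 ℓ) →
    ℓ < integ i →
    ∃ x, x ∈ dom i ∧ (∀ n, x ∈ dom (α n)) ∧
      ∃ ℓ' : ℝ, Tendsto (fun n => ∑ k ∈ Finset.range n, f (α k) x) atTop (𝓝 ℓ') ∧
        ℓ' < f i x
  pis3 : ∃ i : I, integ i = 1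
  pis4 : ∀ i : I,
    Tendsto (fun m : ℕ => integ (smul (m : ℝ) (min1 (smul ((m : ℝ))⁻¹ i))))
      atTop (𝓝 (integ i)) ∧
    Tendsto (fun m : ℕ => integ (smul ((m : ℝ))⁻¹ (min1 (smul (m : ℝ) (abs i)))))
      atTop (𝓝 0)

variable {X I : Type*}

/-- Partial sums in the index set: `psum P α N = α(0) + ⋯ + α(N)`. -/
def psum (P : PreIntegrationSpace X I) (α : ℕ → I) : ℕ → I
  | 0 => α 0
  | n + 1 => P.add (psum P α n) (α (n + 1))

/-- `α : ℕ → I` is a representation, i.e. a member of `I₁`: the series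
`∑_n ∫|α(n)|` converges. -/
def InI1 (P : PreIntegrationSpace X I) (α : ℕ → I) : Prop :=
  ∃ L : ℝ,
    Tendsto (fun N => ∑ k ∈ Finset.range N, P.integ (P.abs (α k))) atTop (𝓝 L)

/-- The domain of the canonically integrable function represented by `α`:
the points of `⋂_n dom f_{α(n)}` where `∑_n |f_{α(n)}(x)|` converges. -/
def dom1 (P : PreIntegrationSpace X I) (α : ℕ → I) : Set X :=
  {x | (∀ n, x ∈ P.dom (α n)) ∧
    ∃ s : ℝ,
      Tendsto (fun N => ∑ k ∈ Finset.range N, |P.f (α k) x|) atTop (𝓝 s)}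

/-- The canonically integrable function represented by `α`:
`g_α(x) = ∑_n f_{α(n)}(x)`. -/
noncomputable def g1 (P : PreIntegrationSpace X I) (α : ℕ → I) (x : X) : ℝ :=
  ∑' n, P.f (α n) x

/-- `L` is the `1`-norm `∫|α| = lim_N ∫|∑_{k≤N} α(k)|` of `α ∈ I₁`. -/
def Norm1Is (P : PreIntegrationSpace X I) (α : ℕ → I) (L : ℝ) : Prop :=
  Tendsto (fun N => P.integ (P.abs (psum P α N))) atTop (𝓝 L)

/-- Addition in `I₁` by interleaving two representations. -/
def addSeq (P : PreIntegrationSpace X I) (α β : ℕ → I) : ℕ → I :=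
  fun m => if m % 2 = 0 then α (m / 2) else β (m / 2)

/-- Negation of a representation, termwise. -/
def negSeq (P : PreIntegrationSpace X I) (β : ℕ → I) : ℕ → I :=
  fun m => P.smul (-1) (β m)

/-- Subtraction `α − β` of representations. -/
def subSeq (P : PreIntegrationSpace X I) (α β : ℕ → I) : ℕ → I :=
  addSeq P α (negSeq P β)

/-- A representation of the partial sum `∑_{n<N} α(n)` of the canonically
integrable function represented by `α` (terms beyond `N` replaced by `0·α(k)`). -/
def truncSeq (P : PreIntegrationSpace X I) (α : ℕ → I) (N : ℕ) : ℕ → I :=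
  fun k => if k < N then α k else P.smul 0 (α k)

/-- The embedding `h : I → I₁`, `i ↦ (i, 0·i, 0·i, …)`. -/
def embedI1 (P : PreIntegrationSpace X I) (i : I) : ℕ → I :=
  fun k => if k = 0 then i else P.smul 0 i


/-!
For `M ≥ 2N` the `M`-th partial sum of the interleaved representation of `α − ∑_{n<N} α(n)` has
domain `⋂_{k ≤ M/2} dom α(k)` and value `∑_{N ≤ k ≤ M/2} α(k)` there, so by the extensionality
axiom of `Λ` it is the `M/2`-th partial sum of the tail `(0·α(0), …, 0·α(N-1), α(N), α(N+1), …)`.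
The 1-norm of that tail is at most `∑_{k ≥ N} ∫|α(k)|`, which tends to `0` as `α ∈ I₁`. The same
identification holds for `α − h(α(0) + ⋯ + α(N-1))`, which gives density, and all partial sums
of `h(i)` equal `i`.
-/

def tailSeq (P : PreIntegrationSpace X I) (α : ℕ → I) (N : ℕ) : ℕ → I :=
  fun k => if N ≤ k then α k else P.smul 0 (α k)

lemma Finset.sum_range_interleave {M : Type*} [AddCommMonoid M] (g h : ℕ → M) (n : ℕ) :
    ∑ m ∈ Finset.range n, (if m % 2 = 0 then g (m / 2) else h (m / 2)) =
      ∑ j ∈ Finset.range ((n + 1) / 2), g j + ∑ j ∈ Finset.range (n / 2), h j := by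
  induction n with
  | zero => simp
  | succ n ih =>
    rw [Finset.sum_range_succ, ih]
    rcases Nat.even_or_odd' n with ⟨k, rfl | rfl⟩
    · rw [if_pos (by omega), show (2 * k + 1 + 1) / 2 = k + 1 by omega,
        show (2 * k + 1) / 2 = k by omega, show 2 * k / 2 = k by omega, Finset.sum_range_succ]
      abel
    · rw [if_neg (by omega), show (2 * k + 1 + 1 + 1) / 2 = k + 1 by omega,
        show (2 * k + 1 + 1) / 2 = k + 1 by omega, show (2 * k + 1) / 2 = k by omega]
      simp only [Finset.sum_range_succ]
      abel

lemma Finset.sum_range_ite_lt {M : Type*} [AddCommMonoid M] (t : ℕ → M) {N q : ℕ} (h : N ≤ q) :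
    ∑ j ∈ Finset.range q, (if j < N then t j else 0) = ∑ j ∈ Finset.range N, t j := by
  rw [← Finset.sum_subset (Finset.range_subset_range.2 h)
    fun x _ hx => if_neg (by simpa using hx)]
  exact Finset.sum_congr rfl fun j hj => if_pos (Finset.mem_range.1 hj)

namespace PreIntegrationSpace

variable (P : PreIntegrationSpace X I)

lemma smul_one (i : I) : P.smul 1 i = i :=
  P.lam_set _ _ (P.dom_smul 1 i) fun x hx => by
    rw [P.f_smul 1 i x (P.dom_smul 1 i ▸ hx), one_mul]

lemma integ_smul (a : ℝ) (i : I) : P.integ (P.smul a i) = a * P.integ i := by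
  have h : P.add (P.smul a i) (P.smul 0 i) = P.smul a i := by
    refine P.lam_set _ _ (by simp [P.dom_add, P.dom_smul]) fun x hx => ?_
    simp only [P.dom_add, P.dom_smul, Set.inter_self] at hx
    rw [P.f_add _ _ x (by simp [P.dom_smul, hx]), P.f_smul a i x hx, P.f_smul 0 i x hx, zero_mul,
      add_zero]
  rw [← h, P.pis1, zero_mul, add_zero]

lemma integ_add (i j : I) : P.integ (P.add i j) = P.integ i + P.integ j := by
  simpa only [smul_one, one_mul] using P.pis1 1 1 i j

lemma integ_nonneg {i : I} (h : ∀ x ∈ P.dom i, 0 ≤ P.f i x) : 0 ≤ P.integ i := by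
  by_contra! hneg
  -- (PIS2) for `-i` against the zero series yields a point where `-f i x > 0`.
  have hpos : 0 < P.integ (P.smul (-1) i) := by rw [integ_smul]; linarith
  have hzero : ∀ x ∈ P.dom i, P.f (P.smul 0 i) x = 0 := fun x hx => by
    rw [P.f_smul 0 i x hx, zero_mul]
  obtain ⟨x, hx, -, ℓ', hℓ', hlt⟩ := P.pis2 (P.smul (-1) i) (fun _ => P.smul 0 i) 0
    (fun _ x hx => (hzero x (P.dom_smul 0 i ▸ hx)).ge)
    (by simp only [integ_smul, zero_mul, Finset.sum_const_zero]; exact tendsto_const_nhds)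
    hpos
  rw [P.dom_smul] at hx
  have hℓ'0 : ℓ' = 0 :=
    tendsto_nhds_unique hℓ' (by simp only [hzero x hx, Finset.sum_const_zero, tendsto_const_nhds])
  rw [hℓ'0, P.f_smul (-1) i x hx] at hlt
  linarith [h x hx]

lemma integ_mono {i j : I} (h : ∀ x ∈ P.dom i, x ∈ P.dom j → P.f i x ≤ P.f j x) :
    P.integ i ≤ P.integ j := by
  have hdiff : 0 ≤ P.integ (P.add (P.smul 1 j) (P.smul (-1) i)) := by
    refine P.integ_nonneg fun x hx => ?_
    simp only [P.dom_add, P.dom_smul, Set.mem_inter_iff] at hx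
    rw [P.f_add _ _ x (by simp only [P.dom_smul]; exact hx), P.f_smul 1 j x hx.1,
      P.f_smul (-1) i x hx.2]
    linarith [h x hx.2 hx.1]
  rw [P.pis1] at hdiff
  linarith

lemma integ_abs_nonneg (i : I) : 0 ≤ P.integ (P.abs i) :=
  P.integ_nonneg fun x hx => by
    rw [P.f_abs i x (P.dom_abs i ▸ hx)]
    exact abs_nonneg _

lemma integ_abs_le_of_forall {i j : I} (h : ∀ x ∈ P.dom i, x ∈ P.dom j → |P.f i x| ≤ P.f j x) :
    P.integ (P.abs i) ≤ P.integ j :=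
  P.integ_mono fun x hx hxj => by
    rw [P.dom_abs] at hx
    rw [P.f_abs i x hx]
    exact h x hx hxj

lemma f_add_abs_abs {i j : I} {x : X} (hi : x ∈ P.dom i) (hj : x ∈ P.dom j) :
    P.f (P.add (P.abs i) (P.abs j)) x = |P.f i x| + |P.f j x| := by
  rw [P.f_add _ _ x (by simp only [P.dom_abs]; exact ⟨hi, hj⟩), P.f_abs i x hi, P.f_abs j x hj]

lemma integ_abs_add_le (i j : I) :
    P.integ (P.abs (P.add i j)) ≤ P.integ (P.abs i) + P.integ (P.abs j) := by
  rw [← P.integ_add]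
  refine P.integ_abs_le_of_forall fun x hx _ => ?_
  rw [P.dom_add] at hx
  rw [P.f_add i j x hx, P.f_add_abs_abs hx.1 hx.2]
  exact abs_add_le _ _

lemma integ_abs_le_integ_abs_add_add (i j : I) :
    P.integ (P.abs i) ≤ P.integ (P.abs (P.add i j)) + P.integ (P.abs j) := by
  rw [← P.integ_add]
  refine P.integ_abs_le_of_forall fun x _ hx => ?_
  simp only [P.dom_add, P.dom_abs, Set.mem_inter_iff] at hx
  rw [P.f_add_abs_abs (by rw [P.dom_add]; exact hx.1) hx.2, P.f_add i j x hx.1]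
  simpa using abs_sub (P.f i x + P.f j x) (P.f j x)

lemma mem_dom_psum (β : ℕ → I) (n : ℕ) (x : X) :
    x ∈ P.dom (psum P β n) ↔ ∀ m ≤ n, x ∈ P.dom (β m) := by
  induction n with
  | zero => simp [psum]
  | succ n ih =>
    rw [psum, P.dom_add, Set.mem_inter_iff, ih]
    exact ⟨fun ⟨h, hn⟩ m hm => (Nat.le_succ_iff.1 hm).elim (h m) (· ▸ hn),
      fun h => ⟨fun m hm => h m (hm.trans n.le_succ), h (n + 1) le_rfl⟩⟩

lemma f_psum (β : ℕ → I) (n : ℕ) (x : X) (hx : x ∈ P.dom (psum P β n)) :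
    P.f (psum P β n) x = ∑ m ∈ Finset.range (n + 1), P.f (β m) x := by
  induction n with
  | zero => simp [psum]
  | succ n ih =>
    rw [psum, P.dom_add] at hx
    rw [psum, P.f_add _ _ x hx, ih hx.1, Finset.sum_range_succ _ (n + 1)]

lemma psum_eq_of_forall {β : ℕ → I} {n : ℕ} {j : I}
    (hdom : ∀ x, x ∈ P.dom j ↔ ∀ m ≤ n, x ∈ P.dom (β m))
    (hf : ∀ x ∈ P.dom j, P.f j x = ∑ m ∈ Finset.range (n + 1), P.f (β m) x) :
    psum P β n = j :=
  P.lam_set _ _ (Set.ext fun x => (P.mem_dom_psum β n x).trans (hdom x).symm) fun x hx => by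
    rw [P.f_psum β n x hx, hf x ((hdom x).2 ((P.mem_dom_psum β n x).1 hx))]

lemma integ_abs_psum_le (β : ℕ → I) (n : ℕ) :
    P.integ (P.abs (psum P β n)) ≤ ∑ m ∈ Finset.range (n + 1), P.integ (P.abs (β m)) := by
  induction n with
  | zero => simp [psum]
  | succ n ih =>
    rw [Finset.sum_range_succ]
    exact (P.integ_abs_add_le _ _).trans (by linarith)

lemma summable_of_inI1 {β : ℕ → I} (hβ : InI1 P β) :
    Summable fun n => P.integ (P.abs (β n)) := by
  obtain ⟨L, hL⟩ := hβ
  have hmono : Monotone fun N => ∑ k ∈ Finset.range N, P.integ (P.abs (β k)) :=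
    fun _ _ hab => Finset.sum_le_sum_of_subset_of_nonneg (Finset.range_subset_range.2 hab)
      fun _ _ _ => P.integ_abs_nonneg _
  exact summable_of_sum_range_le (fun _ => P.integ_abs_nonneg _) fun n => hmono.ge_of_tendsto hL n

lemma exists_norm1Is_of_summable {β : ℕ → I} (hβ : Summable fun n => P.integ (P.abs (β n))) :
    ∃ L, Norm1Is P β L := by
  refine cauchySeq_tendsto_of_complete <| cauchySeq_of_dist_le_of_summable _ (fun n => ?_)
    ((summable_nat_add_iff 1).2 hβ)
  have hsucc : psum P β n.succ = P.add (psum P β n) (β (n + 1)) := rfl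
  rw [Real.dist_eq, abs_sub_le_iff, hsucc]
  constructor
  · linarith [P.integ_abs_le_integ_abs_add_add (psum P β n) (β (n + 1))]
  · linarith [P.integ_abs_add_le (psum P β n) (β (n + 1))]

lemma norm1Is_nonneg {β : ℕ → I} {L : ℝ} (hL : Norm1Is P β L) : 0 ≤ L :=
  ge_of_tendsto' hL fun _ => P.integ_abs_nonneg _

lemma norm1Is_le_tsum {β : ℕ → I} {L : ℝ} (hL : Norm1Is P β L)
    (hβ : Summable fun n => P.integ (P.abs (β n))) : L ≤ ∑' n, P.integ (P.abs (β n)) :=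
  le_of_tendsto' hL fun n => (P.integ_abs_psum_le β n).trans
    (hβ.sum_le_tsum _ fun _ _ => P.integ_abs_nonneg _)

lemma norm1Is_of_eventually_psum_eq {β γ : ℕ → I} {φ : ℕ → ℕ} {L : ℝ} (hγ : Norm1Is P γ L)
    (hφ : Tendsto φ atTop atTop) (h : ∀ᶠ n in atTop, psum P β n = psum P γ (φ n)) :
    Norm1Is P β L :=
  (hγ.comp hφ).congr' (h.mono fun n hn => by simp only [Function.comp_apply, hn])

lemma dom_ite_smul_zero (p : Prop) [Decidable p] (j : I) :
    P.dom (if p then j else P.smul 0 j) = P.dom j := by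
  split_ifs
  · rfl
  · exact P.dom_smul 0 j

lemma f_ite_smul_zero (p : Prop) [Decidable p] {j : I} {x : X} (hx : x ∈ P.dom j) :
    P.f (if p then j else P.smul 0 j) x = if p then P.f j x else 0 := by
  split_ifs
  · rfl
  · rw [P.f_smul 0 j x hx, zero_mul]

lemma integ_abs_ite_smul_zero (p : Prop) [Decidable p] (j : I) :
    P.integ (P.abs (if p then j else P.smul 0 j)) = if p then P.integ (P.abs j) else 0 := by
  split_ifs
  · rfl
  · have habs : P.abs (P.smul 0 j) = P.smul 0 (P.abs j) :=
      P.lam_set _ _ (by simp only [P.dom_abs, P.dom_smul]) fun x hx => by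
        simp only [P.dom_abs, P.dom_smul] at hx
        rw [P.f_abs _ x (by rw [P.dom_smul]; exact hx), P.f_smul 0 j x hx,
          P.f_smul 0 _ x (by rw [P.dom_abs]; exact hx), zero_mul, zero_mul, abs_zero]
    rw [habs, integ_smul, zero_mul]

lemma norm1Is_embedI1 (i : I) : Norm1Is P (embedI1 P i) (P.integ (P.abs i)) := by
  have hpsum : ∀ n, psum P (embedI1 P i) n = i := fun n =>
    P.psum_eq_of_forall (fun x => by
      simpa [embedI1, dom_ite_smul_zero] using ⟨fun h _ _ => h, fun h => h 0 n.zero_le⟩)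
      fun x hx => by
      simp [embedI1, P.f_ite_smul_zero _ hx]
  simpa only [Norm1Is, hpsum] using tendsto_const_nhds

lemma summable_integ_abs_tailSeq {α : ℕ → I} (hα : Summable fun k => P.integ (P.abs (α k)))
    (N : ℕ) : Summable fun k => P.integ (P.abs (tailSeq P α N k)) :=
  hα.of_nonneg_of_le (fun _ => P.integ_abs_nonneg _) fun k => by
    simp only [tailSeq, integ_abs_ite_smul_zero]
    split_ifs
    exacts [le_rfl, P.integ_abs_nonneg _]

lemma tsum_integ_abs_tailSeq {α : ℕ → I} (hα : Summable fun k => P.integ (P.abs (α k))) (N : ℕ) :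
    ∑' k, P.integ (P.abs (tailSeq P α N k)) = ∑' k, P.integ (P.abs (α (k + N))) := by
  rw [← (P.summable_integ_abs_tailSeq hα N).sum_add_tsum_nat_add N,
    Finset.sum_eq_zero fun k hk => by
      rw [tailSeq, integ_abs_ite_smul_zero, if_neg (by simp only [Finset.mem_range] at hk; omega)]]
  simp [tailSeq]

lemma exists_norm1Is_tailSeq {α : ℕ → I} (hα : Summable fun k => P.integ (P.abs (α k))) (N : ℕ) :
    ∃ L, Norm1Is P (tailSeq P α N) L ∧ 0 ≤ L ∧ L ≤ ∑' k, P.integ (P.abs (α (k + N))) := by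
  obtain ⟨L, hL⟩ := P.exists_norm1Is_of_summable (P.summable_integ_abs_tailSeq hα N)
  exact ⟨L, hL, P.norm1Is_nonneg hL,
    P.tsum_integ_abs_tailSeq hα N ▸ P.norm1Is_le_tsum hL (P.summable_integ_abs_tailSeq hα N)⟩

lemma dom_subSeq (α β : ℕ → I) (m : ℕ) :
    P.dom (subSeq P α β m) = if m % 2 = 0 then P.dom (α (m / 2)) else P.dom (β (m / 2)) := by
  simp only [subSeq, addSeq, negSeq]
  split_ifs
  · rfl
  · exact P.dom_smul _ _

lemma mem_dom_psum_subSeq (α β : ℕ → I) (n : ℕ) (x : X) :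
    x ∈ P.dom (psum P (subSeq P α β) n) ↔
      (∀ k ≤ n / 2, x ∈ P.dom (α k)) ∧ ∀ j < (n + 1) / 2, x ∈ P.dom (β j) := by
  rw [mem_dom_psum]
  constructor
  · intro h
    refine ⟨fun k hk => ?_, fun j hj => ?_⟩
    · have hk' := h (2 * k) (by omega)
      rwa [dom_subSeq, if_pos (by omega), show 2 * k / 2 = k by omega] at hk'
    · have hj' := h (2 * j + 1) (by omega)
      rwa [dom_subSeq, if_neg (by omega), show (2 * j + 1) / 2 = j by omega] at hj'
  · rintro ⟨hα, hβ⟩ m hm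
    rw [dom_subSeq]
    split_ifs
    · exact hα _ (by omega)
    · exact hβ _ (by omega)

lemma f_psum_subSeq {α β : ℕ → I} {n : ℕ} {x : X}
    (hx : x ∈ P.dom (psum P (subSeq P α β) n)) :
    P.f (psum P (subSeq P α β) n) x =
      ∑ k ∈ Finset.range (n / 2 + 1), P.f (α k) x -
        ∑ j ∈ Finset.range ((n + 1) / 2), P.f (β j) x := by
  have hβ := ((P.mem_dom_psum_subSeq α β n x).1 hx).2
  have hterm : ∀ m ∈ Finset.range (n + 1), P.f (subSeq P α β m) x =
      if m % 2 = 0 then P.f (α (m / 2)) x else -P.f (β (m / 2)) x := fun m hm => by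
    simp only [subSeq, addSeq, negSeq]
    split_ifs
    · rfl
    · rw [P.f_smul _ _ x (hβ _ (by simp only [Finset.mem_range] at hm; omega)), neg_one_mul]
  have hsplit := Finset.sum_range_interleave (fun k => P.f (α k) x) (fun j => -P.f (β j) x) (n + 1)
  rw [P.f_psum _ n x hx, Finset.sum_congr rfl hterm, hsplit,
    show (n + 1 + 1) / 2 = n / 2 + 1 by omega, Finset.sum_neg_distrib, sub_eq_add_neg]

lemma sum_f_tailSeq {α : ℕ → I} {N K : ℕ} {x : X} (hN : N ≤ K) (hx : ∀ k < K, x ∈ P.dom (α k)) :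
    ∑ k ∈ Finset.range K, P.f (tailSeq P α N k) x =
      ∑ k ∈ Finset.range K, P.f (α k) x - ∑ k ∈ Finset.range N, P.f (α k) x := by
  rw [← Finset.sum_range_ite_lt _ hN, ← Finset.sum_sub_distrib]
  refine Finset.sum_congr rfl fun k hk => ?_
  rw [tailSeq, P.f_ite_smul_zero _ (hx k (Finset.mem_range.1 hk))]
  split_ifs <;> first | omega | simp

lemma psum_subSeq_eq_psum_tailSeq {α β : ℕ → I} {N n : ℕ} (hN : N ≤ n / 2 + 1)
    (hdom : ∀ x, (∀ k ≤ n / 2, x ∈ P.dom (α k)) → ∀ j < (n + 1) / 2, x ∈ P.dom (β j))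
    (hsum : ∀ x, (∀ k ≤ n / 2, x ∈ P.dom (α k)) →
      ∑ j ∈ Finset.range ((n + 1) / 2), P.f (β j) x = ∑ k ∈ Finset.range N, P.f (α k) x) :
    psum P (subSeq P α β) n = psum P (tailSeq P α N) (n / 2) := by
  have hdom_tail : ∀ x, x ∈ P.dom (psum P (tailSeq P α N) (n / 2)) ↔ ∀ k ≤ n / 2, x ∈ P.dom (α k) :=
    fun x => by simp only [mem_dom_psum, tailSeq, dom_ite_smul_zero]
  refine P.psum_eq_of_forall (fun x => ?_) fun x hx => ?_
  · rw [hdom_tail, ← P.mem_dom_psum (subSeq P α β) n x, mem_dom_psum_subSeq]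
    exact ⟨fun h => ⟨h, hdom x h⟩, And.left⟩
  · have hxα := (hdom_tail x).1 hx
    have hxs := (P.mem_dom_psum_subSeq α β n x).2 ⟨hxα, hdom x hxα⟩
    rw [← P.f_psum (subSeq P α β) n x hxs, P.f_psum_subSeq hxs, hsum x hxα, P.f_psum _ _ x hx,
      P.sum_f_tailSeq hN fun k hk => hxα k (by omega)]

lemma norm1Is_subSeq_truncSeq {α : ℕ → I} {N : ℕ} {L : ℝ} (hL : Norm1Is P (tailSeq P α N) L) :
    Norm1Is P (subSeq P α (truncSeq P α N)) L := by
  refine P.norm1Is_of_eventually_psum_eq hL (Nat.tendsto_div_const_atTop two_ne_zero)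
    (eventually_atTop.2 ⟨2 * N, fun n hn => P.psum_subSeq_eq_psum_tailSeq (by omega) ?_ ?_⟩)
  · intro x hx j hj
    rw [truncSeq, dom_ite_smul_zero]
    exact hx j (by omega)
  · intro x hx
    rw [← Finset.sum_range_ite_lt _ (show N ≤ (n + 1) / 2 by omega)]
    exact Finset.sum_congr rfl fun j hj =>
      P.f_ite_smul_zero _ (hx j (by simp only [Finset.mem_range] at hj; omega))

lemma norm1Is_subSeq_embedI1_psum {α : ℕ → I} {N : ℕ} {L : ℝ}
    (hL : Norm1Is P (tailSeq P α (N + 1)) L) :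
    Norm1Is P (subSeq P α (embedI1 P (psum P α N))) L := by
  refine P.norm1Is_of_eventually_psum_eq hL (Nat.tendsto_div_const_atTop two_ne_zero)
    (eventually_atTop.2 ⟨2 * N + 2, fun n hn => P.psum_subSeq_eq_psum_tailSeq (by omega) ?_ ?_⟩)
  · intro x hx j _
    rw [embedI1, dom_ite_smul_zero, mem_dom_psum]
    exact fun k hk => hx k (by omega)
  · intro x hx
    have hxN : x ∈ P.dom (psum P α N) := (P.mem_dom_psum α N x).2 fun k hk => hx k (by omega)
    simp only [embedI1, P.f_ite_smul_zero _ hxN, Finset.sum_ite_eq', Finset.mem_range]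
    rw [if_pos (by omega), P.f_psum α N x hxN]

end PreIntegrationSpace

/-- For every `α ∈ I₁`, the partial sums of its representation converge to it in
`1`-norm: `∫|α − ∑_{n<N} α(n)| → 0`. Consequently the embedding
`i ↦ (i, 0·i, …)` of `I` into `I₁` is norm-preserving and has dense image. -/
theorem partial_sums_tendsto_and_dense (P : PreIntegrationSpace X I) :
    (∀ α : ℕ → I, InI1 P α →
      ∃ r : ℕ → ℝ,
        (∀ N, Norm1Is P (subSeq P α (truncSeq P α N)) (r N)) ∧
        Tendsto r atTop (𝓝 0)) ∧
    (∀ i : I, Norm1Is P (embedI1 P i) (P.integ (P.abs i))) ∧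
    (∀ α : ℕ → I, InI1 P α → ∀ ε : ℝ, 0 < ε →
      ∃ i : I, ∃ L : ℝ, Norm1Is P (subSeq P α (embedI1 P i)) L ∧ L < ε) := by
  refine ⟨fun α hα => ?_, P.norm1Is_embedI1, fun α hα ε hε => ?_⟩
  · choose r hr using P.exists_norm1Is_tailSeq (P.summable_of_inI1 hα)
    exact ⟨r, fun N => P.norm1Is_subSeq_truncSeq (hr N).1,
      squeeze_zero (fun N => (hr N).2.1) (fun N => (hr N).2.2)
        (tendsto_sum_nat_add fun k => P.integ (P.abs (α k)))⟩
  · obtain ⟨N, hN⟩ := eventually_atTop.1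
      ((tendsto_sum_nat_add fun k => P.integ (P.abs (α k))).eventually (gt_mem_nhds hε))
    obtain ⟨L, hL, -, hLle⟩ := P.exists_norm1Is_tailSeq (P.summable_of_inI1 hα) (N + 1)
    exact ⟨psum P α N, L, P.norm1Is_subSeq_embedI1_psum hL, hLle.trans_lt (hN (N + 1) N.le_succ)⟩
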